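/- Fix natural numbers k < n and a k-dimensional linear subspace V of ℝⁿ. Let δ > 0, let p ∈ ℝⁿ, and let Δ be a linear d-simplex in ℝⁿ with d < n − k and p ∉ ASpan(Δ). Then the join p⋆Δ is δ-semitransverse to 𝔉(V) in p if and only if Δ is transverse to 𝔉(V) and the open ball B(π_V(p), δ) in V⊥ is disjoint from π_V(ASpan(Δ)). -/

import Mathlib

/-!
As `dim Gr(p'⋆Δ) + dim V ≤ n`, transversality of a non-degenerate `p'⋆Δ` means that its direction
`ℝ(p' - a) + Gr(Δ)` (for `a ∈ Δ`) meets `V` only in `0`. This holds iff `Gr(Δ) ∩ V = 0` and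
`p' + V` misses `ASpan(Δ)`, i.e. `π_V(p') ∉ π_V(ASpan(Δ))`; the latter also forces `p' ∉ ASpan(Δ)`,
so `p'⋆Δ` is then automatically non-degenerate. Finally `π_V` maps the ball `B(p, δ)` onto the
ball `B(π_V(p), δ)` of `V⊥`.
-/

noncomputable section

open Metric Set

/-- Two linear subspaces of ℝⁿ are transverse if the dimension of their span is maximal. -/
def Transv {n : ℕ} (V W : Submodule ℝ (EuclideanSpace ℝ (Fin n))) : Prop :=
  Module.finrank ℝ ↥(V ⊔ W) = min (Module.finrank ℝ ↥V + Module.finrank ℝ ↥W) n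

/-- The space of directions of the affine span of a family of points (Gr(Δ)). -/
def simplexDir {n m : ℕ} (v : Fin m → EuclideanSpace ℝ (Fin n)) :
    Submodule ℝ (EuclideanSpace ℝ (Fin n)) :=
  (affineSpan ℝ (Set.range v)).direction

/-- Orthogonal projection of ℝⁿ onto the orthogonal complement of V, as a map ℝⁿ → ℝⁿ. -/
def projPerp {n : ℕ} (V : Submodule ℝ (EuclideanSpace ℝ (Fin n)))
    (x : EuclideanSpace ℝ (Fin n)) : EuclideanSpace ℝ (Fin n) :=
  (Submodule.orthogonalProjectionOnto Vᗮ x : EuclideanSpace ℝ (Fin n))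

/-- Orthogonal projection onto V as a continuous linear endomorphism of ℝⁿ. -/
def projCL {n : ℕ} (V : Submodule ℝ (EuclideanSpace ℝ (Fin n))) :
    EuclideanSpace ℝ (Fin n) →L[ℝ] EuclideanSpace ℝ (Fin n) :=
  V.subtypeL.comp (Submodule.orthogonalProjectionOnto V)

/-- Operator-norm distance between orthogonal projections. -/
def dProj {n : ℕ} (V W : Submodule ℝ (EuclideanSpace ℝ (Fin n))) : ℝ :=
  ‖projCL V - projCL W‖

/-- `p⋆Δ` is `δ`-semitransverse to `𝔉(V)` in `p`. -/
def SemiT {n m : ℕ} (δ : ℝ) (p : EuclideanSpace ℝ (Fin n))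
    (v : Fin m → EuclideanSpace ℝ (Fin n))
    (V : Submodule ℝ (EuclideanSpace ℝ (Fin n))) : Prop :=
  ∀ p' : EuclideanSpace ℝ (Fin n), dist p' p < δ →
    AffineIndependent ℝ (Fin.cons p' v : Fin (m+1) → EuclideanSpace ℝ (Fin n)) ∧
    Transv (simplexDir (Fin.cons p' v : Fin (m+1) → EuclideanSpace ℝ (Fin n))) V

/-- Maximal distance between two vertices of a simplex. -/
def rMax {n m : ℕ} (v : Fin m → EuclideanSpace ℝ (Fin n)) : ℝ :=
  ⨆ i, ⨆ j, dist (v i) (v j)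

/-- Minimal distance between a vertex and the affine span of the opposite face. -/
def rMin {n m : ℕ} (v : Fin m → EuclideanSpace ℝ (Fin n)) : ℝ :=
  ⨅ i, Metric.infDist (v i) (affineSpan ℝ (v '' {i}ᶜ) : Set (EuclideanSpace ℝ (Fin n)))

/-- The degeneracy quantity Λ(Δ). -/
def Lam {n m : ℕ} (v : Fin (m+1) → EuclideanSpace ℝ (Fin n)) : ℝ :=
  sSup {t : ℝ | ∃ lam : Fin m → ℝ,
    ‖∑ i, lam i • (v i.succ - v 0)‖ = 1 ∧ ∃ i, t = |lam i|}

/-- ε-transversality of a simplex with vertices `v` to the constant foliation `𝔉(V)`. -/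
def EpsT {n m : ℕ} (ε : ℝ) (v : Fin (m+1) → EuclideanSpace ℝ (Fin n))
    (V : Submodule ℝ (EuclideanSpace ℝ (Fin n))) : Prop :=
  ∀ D : Submodule ℝ (EuclideanSpace ℝ (Fin n)),
    Module.finrank ℝ ↥D = m → dProj (simplexDir v) D < ε → Transv D V

/-- δ-semitransversality of a simplex in its `i`-th vertex. -/
def STat {n m : ℕ} (δ : ℝ) (w : Fin m → EuclideanSpace ℝ (Fin n)) (i : Fin m)
    (V : Submodule ℝ (EuclideanSpace ℝ (Fin n))) : Prop :=
  ∀ p' : EuclideanSpace ℝ (Fin n), dist p' (w i) < δ →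
    AffineIndependent ℝ (Function.update w i p') ∧
    Transv (simplexDir (Function.update w i p')) V

/-- The coordinate subspace ℝᵏ × {0} of ℝⁿ. -/
def stdFol (n k : ℕ) : Submodule ℝ (EuclideanSpace ℝ (Fin n)) where
  carrier := {x | ∀ i : Fin n, k ≤ (i : ℕ) → x i = 0}
  zero_mem' := fun i _ => rfl
  add_mem' := by
    intro x y hx hy i hi
    show x i + y i = 0
    rw [hx i hi, hy i hi, add_zero]
  smul_mem' := by
    intro c x hx i hi
    show c * x i = 0
    rw [hx i hi, mul_zero]

/-- Graph of a linear map V → V⊥ as a subspace of ℝⁿ. -/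
def graphOf {n : ℕ} {V : Submodule ℝ (EuclideanSpace ℝ (Fin n))}
    (T : ↥V →L[ℝ] ↥Vᗮ) : Submodule ℝ (EuclideanSpace ℝ (Fin n)) :=
  LinearMap.range (V.subtype + Vᗮ.subtype.comp T.toLinearMap)

theorem AffineIndependent.cons_iff_notMem_affineSpan {k V P : Type*} [DivisionRing k]
    [AddCommGroup V] [Module k V] [AddTorsor V P] {m : ℕ} {v : Fin m → P}
    (hv : AffineIndependent k v) (q : P) :
    AffineIndependent k (Fin.cons q v : Fin (m + 1) → P) ↔ q ∉ affineSpan k (range v) := by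
  have himage : (Fin.cons q v : Fin (m + 1) → P) '' {x | x ≠ 0} = range v := by
    rw [← compl_singleton_eq, ← Fin.range_succ, ← range_comp]
    rfl
  rw [← himage]
  refine ⟨fun h => ?_, AffineIndependent.affineIndependent_of_notMem_span ?_⟩
  · have := h.notMem_affineSpan_sdiff 0 univ
    rwa [← compl_eq_univ_sdiff] at this
  · convert hv.comp_embedding ⟨fun x : {y : Fin (m + 1) // y ≠ 0} => x.1.pred x.2,
      fun a b hab => Subtype.ext (by simpa using hab)⟩ using 1
    funext ⟨x, hx⟩
    obtain ⟨j, rfl⟩ := Fin.eq_succ_of_ne_zero hx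
    exact congrArg v (Fin.pred_succ j (h := hx)).symm

theorem AffineSubspace.direction_affineSpan_insert_inf_eq_bot_iff {k V P : Type*} [Field k]
    [AddCommGroup V] [Module k V] [AddTorsor V P] {A : AffineSubspace k P} {q : P} (hq : q ∉ A)
    (W : Submodule k V) :
    (affineSpan k (insert q (A : Set P))).direction ⊓ W = ⊥ ↔
      A.direction ⊓ W = ⊥ ∧ ∀ b ∈ A, q -ᵥ b ∉ W := by
  obtain hA | ⟨a, ha⟩ := (A : Set P).eq_empty_or_nonempty
  · simp [(A.coe_eq_bot_iff).mp hA, AffineSubspace.notMem_bot, direction_affineSpan]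
  rw [direction_affineSpan_insert ha]
  constructor
  · intro h
    refine ⟨eq_bot_iff.2 ((inf_le_inf_right W le_sup_right).trans h.le),
      fun b hb hqb => hq ?_⟩
    have hmem : q -ᵥ b ∈ (k ∙ (q -ᵥ a) ⊔ A.direction) ⊓ W := by
      refine ⟨?_, hqb⟩
      rw [← vsub_sub_vsub_cancel_right q b a]
      exact sub_mem (Submodule.mem_sup_left (Submodule.mem_span_singleton_self _))
        (Submodule.mem_sup_right (vsub_mem_direction hb ha))
    rw [h, Submodule.mem_bot, vsub_eq_zero_iff_eq] at hmem
    exact hmem ▸ hb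
  · rintro ⟨hD, hqW⟩
    rw [eq_bot_iff]
    rintro _ ⟨hw, hwW⟩
    obtain ⟨_, hs, d, hd, rfl⟩ := Submodule.mem_sup.mp hw
    obtain ⟨t, rfl⟩ := Submodule.mem_span_singleton.mp hs
    by_cases ht : t = 0
    · subst ht
      rw [zero_smul, zero_add] at hwW ⊢
      exact hD ▸ Submodule.mem_inf.mpr ⟨hd, hwW⟩
    · -- `q` would lie in `b + W` for the point `b = a - t⁻¹ d` of `A`
      refine absurd ?_
        (hqW (-t⁻¹ • d +ᵥ a) (vadd_mem_of_mem_direction (A.direction.smul_mem _ hd) ha))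
      rw [vsub_vadd_eq_vsub_sub, show q -ᵥ a - -t⁻¹ • d = t⁻¹ • (t • (q -ᵥ a) + d) by
        rw [smul_add, smul_smul, inv_mul_cancel₀ ht, one_smul, neg_smul, sub_neg_eq_add]]
      exact W.smul_mem _ hwW

section Euclidean

variable {n : ℕ}

local notation "ℝ^" n:max => EuclideanSpace ℝ (Fin n)

theorem transv_iff_inf_eq_bot {W V : Submodule ℝ (ℝ^n)}
    (h : Module.finrank ℝ W + Module.finrank ℝ V ≤ n) : Transv W V ↔ W ⊓ V = ⊥ := by
  have hsum := Submodule.finrank_sup_add_finrank_inf_eq W V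
  rw [Transv, min_eq_left h, ← Submodule.finrank_eq_zero]
  omega

theorem finrank_simplexDir {m : ℕ} {v : Fin (m + 1) → ℝ^n}
    (hv : AffineIndependent ℝ v) : Module.finrank ℝ (simplexDir v) = m := by
  rw [simplexDir, direction_affineSpan]
  exact hv.finrank_vectorSpan (Fintype.card_fin _)

theorem simplexDir_cons {m : ℕ} (q : ℝ^n) (v : Fin m → ℝ^n) :
    simplexDir (Fin.cons q v : Fin (m + 1) → ℝ^n) =
      (affineSpan ℝ (insert q (affineSpan ℝ (range v) : Set (ℝ^n)))).direction := by
  rw [simplexDir, Fin.range_cons, affineSpan_insert_affineSpan]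

variable {V : Submodule ℝ (ℝ^n)}

theorem projPerp_eq_projPerp_iff {x y : ℝ^n} :
    projPerp V x = projPerp V y ↔ x - y ∈ V := by
  rw [← sub_eq_zero, projPerp, projPerp, ← Submodule.coe_sub, ← map_sub, Submodule.coe_eq_zero,
    Submodule.orthogonalProjectionOnto_eq_zero_iff, Submodule.orthogonal_orthogonal]

theorem projPerp_image_ball (p : ℝ^n) (δ : ℝ) :
    projPerp V '' ball p δ = ball (projPerp V p) δ ∩ Vᗮ := by
  have hproj : projPerp V = Vᗮ.starProjection := rfl
  ext y
  constructor
  · rintro ⟨x, hx, rfl⟩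
    refine ⟨?_, Submodule.coe_mem _⟩
    rw [mem_ball, dist_eq_norm, hproj, ← map_sub]
    exact (Submodule.norm_starProjection_apply_le _ _).trans_lt hx
  · rintro ⟨hy, hyV⟩
    have hy' : Vᗮ.starProjection (y - projPerp V p) = y - projPerp V p :=
      Submodule.starProjection_eq_self_iff.mpr (sub_mem hyV (Submodule.coe_mem _))
    refine ⟨p + (y - projPerp V p), ?_, ?_⟩
    · rwa [mem_ball, dist_eq_norm, add_sub_cancel_left, ← dist_eq_norm]
    · rw [hproj] at hy' ⊢
      rw [map_add, hy', add_sub_cancel]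

theorem ball_inter_projPerp_image_eq_empty_iff (p : ℝ^n) (δ : ℝ) (S : Set (ℝ^n)) :
    ball (projPerp V p) δ ∩ projPerp V '' S = ∅ ↔
      ∀ q ∈ ball p δ, projPerp V q ∉ projPerp V '' S := by
  have hS : projPerp V '' S ⊆ Vᗮ := by
    rintro _ ⟨x, -, rfl⟩
    exact Submodule.coe_mem _
  rw [eq_empty_iff_forall_notMem]
  constructor
  · intro h q hq hqS
    exact h _ ⟨(projPerp_image_ball p δ ▸ mem_image_of_mem _ hq).1, hqS⟩
  · rintro h y ⟨hy, hyS⟩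
    obtain ⟨q, hq, rfl⟩ : y ∈ projPerp V '' ball p δ := projPerp_image_ball p δ ▸ ⟨hy, hS hyS⟩
    exact h q hq hyS

theorem affineIndependent_cons_and_transv_iff {m : ℕ} {v : Fin (m + 1) → ℝ^n}
    (hv : AffineIndependent ℝ v) (hdim : m + 1 + Module.finrank ℝ V ≤ n) (q : ℝ^n) :
    (AffineIndependent ℝ (Fin.cons q v : Fin (m + 2) → ℝ^n) ∧
        Transv (simplexDir (Fin.cons q v : Fin (m + 2) → ℝ^n)) V) ↔
      simplexDir v ⊓ V = ⊥ ∧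
        projPerp V q ∉ projPerp V '' (affineSpan ℝ (range v) : Set (ℝ^n)) := by
  set A := affineSpan ℝ (range v)
  have htransv (hq : q ∉ A) :
      Transv (simplexDir (Fin.cons q v : Fin (m + 2) → ℝ^n)) V ↔
        simplexDir v ⊓ V = ⊥ ∧ projPerp V q ∉ projPerp V '' A := by
    have hdimq : Module.finrank ℝ (simplexDir (Fin.cons q v : Fin (m + 2) → _)) +
        Module.finrank ℝ V ≤ n := by
      rwa [finrank_simplexDir ((hv.cons_iff_notMem_affineSpan q).mpr hq)]
    rw [transv_iff_inf_eq_bot hdimq, simplexDir_cons,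
      AffineSubspace.direction_affineSpan_insert_inf_eq_bot_iff hq]
    refine and_congr_right' ⟨fun h ⟨b, hb, hqb⟩ => h b hb ?_, fun h b hb hqb => h ⟨b, hb, ?_⟩⟩
    · exact projPerp_eq_projPerp_iff.mp hqb.symm
    · exact projPerp_eq_projPerp_iff.mpr hqb |>.symm
  rw [hv.cons_iff_notMem_affineSpan]
  exact ⟨fun ⟨hq, hT⟩ => (htransv hq).mp hT,
    fun h => have hq : q ∉ A := fun hqA => h.2 ⟨q, hqA, rfl⟩; ⟨hq, (htransv hq).mpr h⟩⟩

end Euclidean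

theorem stmt_3_general (n k d : ℕ) (hd : d < n - k)
    (V : Submodule ℝ (EuclideanSpace ℝ (Fin n))) (hV : Module.finrank ℝ ↥V = k)
    (δ : ℝ) (hδ : 0 < δ)
    (p : EuclideanSpace ℝ (Fin n)) (v : Fin (d+1) → EuclideanSpace ℝ (Fin n))
    (hAI : AffineIndependent ℝ v) :
    SemiT δ p v V ↔
      (Transv (simplexDir v) V ∧
        Metric.ball (projPerp V p) δ ∩
          (projPerp V '' (affineSpan ℝ (Set.range v) : Set (EuclideanSpace ℝ (Fin n)))) = ∅) := by
  have hdim : d + 1 + Module.finrank ℝ V ≤ n := by omega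
  have hdimD : Module.finrank ℝ (simplexDir v) + Module.finrank ℝ V ≤ n := by
    rw [finrank_simplexDir hAI]; omega
  simp only [SemiT, ← mem_ball]
  simp_rw [affineIndependent_cons_and_transv_iff hAI hdim, ball_inter_projPerp_image_eq_empty_iff,
    transv_iff_inf_eq_bot hdimD]
  exact ⟨fun h => ⟨(h p (mem_ball_self hδ)).1, fun q hq => (h q hq).2⟩,
    fun h q hq => ⟨h.1, h.2 q hq⟩⟩

theorem stmt_3 (n k d : ℕ) (hk : k < n) (hd : d < n - k)
    (V : Submodule ℝ (EuclideanSpace ℝ (Fin n))) (hV : Module.finrank ℝ ↥V = k)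
    (δ : ℝ) (hδ : 0 < δ)
    (p : EuclideanSpace ℝ (Fin n)) (v : Fin (d+1) → EuclideanSpace ℝ (Fin n))
    (hAI : AffineIndependent ℝ v)
    (hp : p ∉ affineSpan ℝ (Set.range v)) :
    SemiT δ p v V ↔
      (Transv (simplexDir v) V ∧
        Metric.ball (projPerp V p) δ ∩
          (projPerp V '' (affineSpan ℝ (Set.range v) : Set (EuclideanSpace ℝ (Fin n)))) = ∅) :=
  stmt_3_general n k d hd V hV δ hδ p v hAI
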